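/- Let d > 0 be rational. The generalized polynomial g*(x) = Σ_{i=1}^n |x_i|^d uniquely minimizes ‖g‖₁ over all finite linear combinations g(x) = Σ_α g_α |x|^α (α ∈ Q^n nonnegative with |α| = d) whose sublevel set {x : g(x) ≤ 1} has volume at most vol({x : Σ_i |x_i|^d ≤ 1}). -/

import Mathlib

/-!
Write `g = ∑ c_α |x|^α`. Weighted AM-GM bounds each `|x|^α` by `∑ i, (α_i / d) |x_i|^d`, so
`g ≤ ∑ i, w_i |x_i|^d` with `w_i = ∑ α, |c_α| α_i / d` and `∑ i, w_i = ‖c‖₁`. The sublevel set of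
the right-hand side is a diagonal linear image of the unit `d`-ball, of volume `(∏ i, w_i)^(-1/d) ρ_d`,
so the volume constraint forces `∏ i, w_i ≥ 1`; if `‖c‖₁ ≤ n`, AM-GM then forces every `w_i = 1`.
Now the `d`-ball lies in `{g ≤ 1}` and has at least its (finite) volume, so the open set `{g < 1}`
lies in the ball. On the coordinate axes `g (t eᵢ) = c_{d eᵢ} |t|^d`, which gives `c_{d eᵢ} ≥ 1` for
every `i`; with `‖c‖₁ ≤ n` this leaves only `g = g*`.
-/

open MeasureTheory Finset Filter Topology

noncomputable section

variable {ι : Type*}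

def exponentWeight (c : (ι → ℚ) →₀ ℝ) (d : ℚ) (i : ι) : ℝ :=
  ∑ α ∈ c.support, |c α| * ((α i : ℝ) / d)

theorem exponentWeight_nonneg {c : (ι → ℚ) →₀ ℝ} {d : ℚ} (hd : 0 < d)
    (hc : ∀ α ∈ c.support, ∀ i, 0 ≤ α i) (i : ι) : 0 ≤ exponentWeight c d i :=
  sum_nonneg fun α hα => mul_nonneg (abs_nonneg _) <|
    div_nonneg (Rat.cast_nonneg.mpr (hc α hα i)) (Rat.cast_nonneg.mpr hd.le)

theorem Pi.single_left_injective {M : Type*} [DecidableEq ι] [Zero M] {b : M} (hb : b ≠ 0) :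
    Function.Injective fun i => (Pi.single i b : ι → M) := fun i j h => by
  by_contra hij
  simpa [hij, hb] using congrFun h i

variable [Fintype ι]

def absMonomial (α : ι → ℚ) (x : ι → ℝ) : ℝ := ∏ i, |x i| ^ (α i : ℝ)

def absPolyEval (c : (ι → ℚ) →₀ ℝ) (x : ι → ℝ) : ℝ := ∑ α ∈ c.support, c α * absMonomial α x

def weightedPowSum (w : ι → ℝ) (d : ℝ) (x : ι → ℝ) : ℝ := ∑ i, w i * |x i| ^ d

theorem absMonomial_nonneg (α : ι → ℚ) (x : ι → ℝ) : 0 ≤ absMonomial α x :=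
  prod_nonneg fun _ _ => Real.rpow_nonneg (abs_nonneg _) _

theorem prod_abs_rpow_le_sum {d : ℝ} (hd : 0 < d) {a : ι → ℝ} (ha : ∀ i, 0 ≤ a i)
    (hsum : ∑ i, a i = d) (x : ι → ℝ) :
    ∏ i, |x i| ^ a i ≤ ∑ i, a i / d * |x i| ^ d := by
  calc ∏ i, |x i| ^ a i = ∏ i, (|x i| ^ d) ^ (a i / d) := by
        refine prod_congr rfl fun i _ => ?_
        rw [← Real.rpow_mul (abs_nonneg _), mul_div_cancel₀ _ hd.ne']
    _ ≤ ∑ i, a i / d * |x i| ^ d :=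
        Real.geom_mean_le_arith_mean_weighted univ _ _ (fun i _ => div_nonneg (ha i) hd.le)
          (by rw [← sum_div, hsum, div_self hd.ne']) fun i _ => Real.rpow_nonneg (abs_nonneg _) _

theorem continuous_absPolyEval {c : (ι → ℚ) →₀ ℝ} (hc : ∀ α ∈ c.support, ∀ i, 0 ≤ α i) :
    Continuous (absPolyEval c) :=
  continuous_finsetSum _ fun α hα => continuous_const.mul <|
    continuous_finsetProd _ fun i _ => (continuous_apply i).abs.rpow_const fun _ =>
      Or.inr (Rat.cast_nonneg.mpr (hc α hα i))

theorem continuous_sum_abs_rpow {d : ℝ} (hd : 0 ≤ d) :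
    Continuous fun x : ι → ℝ => ∑ i, |x i| ^ d :=
  continuous_finsetSum _ fun i _ => (continuous_apply i).abs.rpow_const fun _ => Or.inr hd

theorem sum_exponentWeight {c : (ι → ℚ) →₀ ℝ} {d : ℚ} (hd : d ≠ 0)
    (hc : ∀ α ∈ c.support, ∑ i, α i = d) :
    ∑ i, exponentWeight c d i = ∑ α ∈ c.support, |c α| := by
  simp only [exponentWeight]
  rw [sum_comm]
  refine sum_congr rfl fun α hα => ?_
  rw [← mul_sum, ← sum_div, ← Rat.cast_sum, hc α hα, div_self (Rat.cast_ne_zero.mpr hd), mul_one]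

theorem absPolyEval_le_weightedPowSum {c : (ι → ℚ) →₀ ℝ} {d : ℚ} (hd : 0 < d)
    (hc : ∀ α ∈ c.support, (∀ i, 0 ≤ α i) ∧ ∑ i, α i = d) (x : ι → ℝ) :
    absPolyEval c x ≤ weightedPowSum (exponentWeight c d) d x := by
  calc absPolyEval c x ≤ ∑ α ∈ c.support, |c α| * absMonomial α x :=
        sum_le_sum fun α _ => mul_le_mul_of_nonneg_right (le_abs_self _) (absMonomial_nonneg α x)
    _ ≤ ∑ α ∈ c.support, |c α| * ∑ i, (α i : ℝ) / d * |x i| ^ (d : ℝ) :=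
        sum_le_sum fun α hα => mul_le_mul_of_nonneg_left (prod_abs_rpow_le_sum
          (Rat.cast_pos.mpr hd) (fun i => Rat.cast_nonneg.mpr ((hc α hα).1 i))
          (by rw [← Rat.cast_sum, (hc α hα).2]) x) (abs_nonneg _)
    _ = weightedPowSum (exponentWeight c d) d x := by
        simp only [weightedPowSum, exponentWeight, mul_sum, sum_mul]
        rw [sum_comm]
        exact sum_congr rfl fun i _ => sum_congr rfl fun α _ => by ring

theorem volume_sum_abs_rpow_le_one_lt_top {d : ℝ} (hd : 0 < d) :
    volume {x : ι → ℝ | ∑ i, |x i| ^ d ≤ 1} < ⊤ := by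
  refine (Metric.isBounded_closedBall (x := (0 : ι → ℝ)) (r := 1)).subset
    (fun x hx => ?_) |>.measure_lt_top
  rw [mem_closedBall_zero_iff, pi_norm_le_iff_of_nonneg zero_le_one]
  intro i
  have hi : |x i| ^ d ≤ 1 :=
    (single_le_sum (fun j _ => Real.rpow_nonneg (abs_nonneg (x j)) d) (mem_univ i)).trans hx
  rw [Real.norm_eq_abs]
  by_contra! h
  exact (Real.one_lt_rpow h hd).not_ge hi

theorem volume_sum_abs_rpow_le_one_pos {d : ℝ} (hd : 0 < d) :
    0 < volume {x : ι → ℝ | ∑ i, |x i| ^ d ≤ 1} :=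
  calc 0 < volume {x : ι → ℝ | ∑ i, |x i| ^ d < 1} :=
        (isOpen_lt (continuous_sum_abs_rpow hd.le) continuous_const).measure_pos _
          ⟨0, by simp [Real.zero_rpow hd.ne']⟩
    _ ≤ _ := measure_mono fun _ hx => le_of_lt (α := ℝ) hx

theorem volume_weightedPowSum_le_one {d : ℝ} (hd : 0 < d) {w : ι → ℝ} (hw : ∀ i, 0 < w i) :
    volume {x | weightedPowSum w d x ≤ 1} =
      ENNReal.ofReal (∏ i, w i ^ d⁻¹)⁻¹ * volume {x : ι → ℝ | ∑ i, |x i| ^ d ≤ 1} := by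
  classical
  set v : ι → ℝ := fun i => w i ^ d⁻¹
  have hv : ∀ i, 0 < v i := fun i => Real.rpow_pos_of_pos (hw i) _
  have hvd : ∀ i, v i ^ d = w i := fun i => by
    rw [← Real.rpow_mul (hw i).le, inv_mul_cancel₀ hd.ne', Real.rpow_one]
  set f := Matrix.toLin' (Matrix.diagonal v)
  have hdet : LinearMap.det f = ∏ i, v i := by
    rw [LinearMap.det_toLin', Matrix.det_diagonal]
  have hpre : {x | weightedPowSum w d x ≤ 1} = f ⁻¹' {x : ι → ℝ | ∑ i, |x i| ^ d ≤ 1} := by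
    ext x
    simp only [Set.mem_ofPred_eq, Set.mem_preimage, f, Matrix.toLin'_apply,
      Matrix.mulVec_diagonal, weightedPowSum]
    refine iff_of_eq (congrArg (· ≤ (1 : ℝ)) (sum_congr rfl fun i _ => ?_))
    rw [abs_mul, abs_of_pos (hv i), Real.mul_rpow (hv i).le (abs_nonneg _), hvd]
  have hprod : 0 < ∏ i, v i := prod_pos fun i _ => hv i
  rw [hpre, Measure.addHaar_preimage_linearMap _ (hdet ▸ hprod.ne'), hdet,
    abs_of_pos (inv_pos.mpr hprod)]

theorem one_le_prod_of_volume_weightedPowSum_le {d : ℝ} (hd : 0 < d) {w : ι → ℝ}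
    (hw : ∀ i, 0 < w i)
    (hvol : volume {x | weightedPowSum w d x ≤ 1} ≤ volume {x : ι → ℝ | ∑ i, |x i| ^ d ≤ 1}) :
    1 ≤ ∏ i, w i := by
  have hρ := volume_sum_abs_rpow_le_one_pos (ι := ι) hd
  have hρ' := volume_sum_abs_rpow_le_one_lt_top (ι := ι) hd
  have hle : ENNReal.ofReal (∏ i, w i ^ d⁻¹)⁻¹ ≤ 1 :=
    (ENNReal.mul_le_mul_iff_left hρ.ne' hρ'.ne).mp <| by
      rwa [one_mul, ← volume_weightedPowSum_le_one hd hw]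
  rw [ENNReal.ofReal_le_one, inv_le_one₀ (prod_pos fun i _ => Real.rpow_pos_of_pos (hw i) _),
    Real.finsetProd_rpow _ _ fun i _ => (hw i).le] at hle
  by_contra! h
  exact (Real.rpow_lt_one (prod_nonneg fun i _ => (hw i).le) h (inv_pos.mpr hd)).not_ge hle

/-- Perturbing the weights to `w + ε` reduces to the case of positive weights. -/
theorem one_le_prod_of_setOf_weightedPowSum_subset {d : ℝ} (hd : 0 < d) {w : ι → ℝ}
    (hw : ∀ i, 0 ≤ w i) {S : Set (ι → ℝ)} (hS : {x | weightedPowSum w d x ≤ 1} ⊆ S)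
    (hvol : volume S ≤ volume {x : ι → ℝ | ∑ i, |x i| ^ d ≤ 1}) :
    1 ≤ ∏ i, w i := by
  have hperturb : ∀ ε > 0, 1 ≤ ∏ i, (w i + ε) := fun ε hε => by
    refine one_le_prod_of_volume_weightedPowSum_le hd (fun i => by linarith [hw i]) <|
      (measure_mono fun x hx => hS ?_).trans hvol
    refine le_trans (?_ : weightedPowSum w d x ≤ weightedPowSum (fun i => w i + ε) d x) hx
    exact sum_le_sum fun i _ =>
      mul_le_mul_of_nonneg_right (by linarith) (Real.rpow_nonneg (abs_nonneg _) _)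
  have hlim : Tendsto (fun ε : ℝ => ∏ i, (w i + ε)) (𝓝[>] 0) (𝓝 (∏ i, w i)) := by
    have hcont : Continuous fun ε : ℝ => ∏ i, (w i + ε) := by fun_prop
    simpa using (hcont.tendsto 0).mono_left nhdsWithin_le_nhds
  exact ge_of_tendsto hlim (eventually_nhdsWithin_of_forall hperturb)

/-- The equality case of AM-GM, via `log w ≤ w - 1` with equality only at `w = 1`. -/
theorem eq_one_of_one_le_prod_of_sum_le_card {w : ι → ℝ} (hw : ∀ i, 0 ≤ w i)
    (hprod : 1 ≤ ∏ i, w i) (hsum : ∑ i, w i ≤ Fintype.card ι) (i : ι) : w i = 1 := by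
  have hpos : ∀ j, 0 < w j := fun j => (hw j).lt_of_ne' <|
    prod_ne_zero_iff.mp (by linarith) j (mem_univ j)
  have hlog : 0 ≤ ∑ j, Real.log (w j) := by
    rw [← Real.log_prod fun j _ => (hpos j).ne']
    exact Real.log_nonneg hprod
  by_contra hi
  have : ∑ j, Real.log (w j) < ∑ j, (w j - 1) :=
    sum_lt_sum (fun j _ => Real.log_le_sub_one_of_pos (hpos j))
      ⟨i, mem_univ i, Real.log_lt_sub_one_of_pos (hpos i) hi⟩
  simp only [sum_sub_distrib, sum_const, card_univ, nsmul_eq_mul, mul_one] at this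
  linarith

theorem exponentWeight_eq_one {c : (ι → ℚ) →₀ ℝ} {d : ℚ} (hd : 0 < d)
    (hc : ∀ α ∈ c.support, (∀ i, 0 ≤ α i) ∧ ∑ i, α i = d)
    (hvol : volume {x | absPolyEval c x ≤ 1} ≤ volume {x : ι → ℝ | ∑ i, |x i| ^ (d : ℝ) ≤ 1})
    (hle : ∑ α ∈ c.support, |c α| ≤ Fintype.card ι) (i : ι) : exponentWeight c d i = 1 := by
  have hw := exponentWeight_nonneg hd fun α hα => (hc α hα).1
  refine eq_one_of_one_le_prod_of_sum_le_card hw ?_ ?_ i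
  · exact one_le_prod_of_setOf_weightedPowSum_subset (Rat.cast_pos.mpr hd) hw
      (fun x hx => (absPolyEval_le_weightedPowSum hd hc x).trans hx) hvol
  · rwa [sum_exponentWeight hd.ne' fun α hα => (hc α hα).2]

theorem MeasureTheory.subset_of_measure_le_of_isOpen {X : Type*} [TopologicalSpace X]
    [MeasurableSpace X] [OpensMeasurableSpace X] {μ : Measure X} [μ.IsOpenPosMeasure]
    {B S U : Set X} (hB : IsClosed B) (hBS : B ⊆ S) (hSB : μ S ≤ μ B) (hB_fin : μ B ≠ ⊤)
    (hU : IsOpen U) (hUS : U ⊆ S) : U ⊆ B := by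
  have hnull : μ (S \ B) = 0 := by
    rw [measure_sdiff hBS hB.measurableSet.nullMeasurableSet hB_fin, tsub_eq_zero_of_le hSB]
  exact Set.sdiff_eq_empty.mp <| ((hU.sdiff hB).measure_eq_zero_iff μ).mp <|
    measure_mono_null (Set.sdiff_subset_sdiff_left hUS) hnull

theorem absMonomial_piSingle_self [DecidableEq ι] (d : ℚ) (i : ι) (t : ℝ) :
    absMonomial (Pi.single i d) (Pi.single i t) = |t| ^ (d : ℝ) := by
  rw [absMonomial, Fintype.prod_eq_single i fun j hj => by simp [hj]]
  simp

theorem absMonomial_piSingle_of_ne [DecidableEq ι] {d : ℚ} {α : ι → ℚ} (hsum : ∑ j, α j = d)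
    {i : ι} (hne : α ≠ Pi.single i d) (t : ℝ) :
    absMonomial α (Pi.single i t) = 0 := by
  obtain ⟨j, hji, hj⟩ : ∃ j, j ≠ i ∧ α j ≠ 0 := by
    by_contra! h
    refine hne (funext fun j => ?_)
    rcases eq_or_ne j i with rfl | hji
    · rw [Pi.single_eq_same, ← hsum, Fintype.sum_eq_single j fun k hk => h k hk]
    · rw [Pi.single_eq_of_ne hji, h j hji]
  refine prod_eq_zero (mem_univ j) ?_
  rw [Pi.single_eq_of_ne hji, abs_zero, Real.zero_rpow (Rat.cast_ne_zero.mpr hj)]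

theorem absPolyEval_piSingle [DecidableEq ι] {c : (ι → ℚ) →₀ ℝ} {d : ℚ}
    (hc : ∀ α ∈ c.support, ∑ i, α i = d) (i : ι) (t : ℝ) :
    absPolyEval c (Pi.single i t) = c (Pi.single i d) * |t| ^ (d : ℝ) := by
  rw [absPolyEval, sum_eq_single (Pi.single i d), absMonomial_piSingle_self]
  · exact fun α hα hne => by
      rw [absMonomial_piSingle_of_ne (hc α hα) hne, mul_zero]
  · exact fun h => by rw [Finsupp.notMem_support_iff.mp h, zero_mul]

theorem one_le_of_forall_mul_lt_one_imp_le_one {a : ℝ} (h : ∀ s > 0, a * s < 1 → s ≤ 1) :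
    1 ≤ a := by
  by_contra! ha
  rcases le_or_gt a 0 with ha0 | ha0
  · linarith [h 2 two_pos (by linarith)]
  · obtain ⟨s, hs1, hsa⟩ := exists_between ((one_lt_inv₀ ha0).mpr ha)
    have has : a * s < 1 := by simpa [ha0.ne'] using mul_lt_mul_of_pos_left hsa ha0
    exact (h s (by linarith) has).not_gt hs1

theorem sum_abs_piSingle_rpow [DecidableEq ι] {d : ℝ} (hd : d ≠ 0) (i : ι) (t : ℝ) :
    ∑ j, |(Pi.single i t : ι → ℝ) j| ^ d = |t| ^ d := by
  rw [Fintype.sum_eq_single i fun j hj => by simp [hj, Real.zero_rpow hd], Pi.single_eq_same]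

theorem one_le_coeff_piSingle [DecidableEq ι] {c : (ι → ℚ) →₀ ℝ} {d : ℚ} (hd : 0 < d)
    (hc : ∀ α ∈ c.support, ∑ i, α i = d)
    (hsub : {x | absPolyEval c x < 1} ⊆ {x : ι → ℝ | ∑ i, |x i| ^ (d : ℝ) ≤ 1}) (i : ι) :
    1 ≤ c (Pi.single i d) := by
  have hD : (0 : ℝ) < d := Rat.cast_pos.mpr hd
  refine one_le_of_forall_mul_lt_one_imp_le_one fun s hs hlt => ?_
  have hroot : |s ^ (d : ℝ)⁻¹| ^ (d : ℝ) = s := by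
    rw [abs_of_pos (Real.rpow_pos_of_pos hs _), ← Real.rpow_mul hs.le, inv_mul_cancel₀ hD.ne',
      Real.rpow_one]
  have hmem := @hsub (Pi.single i (s ^ (d : ℝ)⁻¹)) <| by
    rw [Set.mem_ofPred_eq, absPolyEval_piSingle hc, hroot]
    exact hlt
  rwa [Set.mem_ofPred_eq, sum_abs_piSingle_rpow hD.ne', hroot] at hmem

theorem Finsupp.eq_sum_single_one_of_sum_abs_le {κ : Type*} {f : ι → κ} (hf : f.Injective)
    {c : κ →₀ ℝ} (hge : ∀ i, 1 ≤ c (f i)) (hle : ∑ a ∈ c.support, |c a| ≤ Fintype.card ι) :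
    c = ∑ i, Finsupp.single (f i) 1 := by
  classical
  have hT : univ.image f ⊆ c.support := fun a ha => by
    obtain ⟨i, -, rfl⟩ := mem_image.mp ha
    exact Finsupp.mem_support_iff.mpr (by linarith [hge i])
  have hsplit := Finset.sum_sdiff (f := fun a => |c a|) hT
  rw [Finset.sum_image fun i _ j _ h => hf h] at hsplit
  have hrest_nonneg : 0 ≤ ∑ a ∈ c.support \ univ.image f, |c a| :=
    Finset.sum_nonneg fun _ _ => abs_nonneg _
  have hexcess_nonneg : ∀ i, 0 ≤ |c (f i)| - 1 := fun i => by
    linarith [hge i, le_abs_self (c (f i))]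
  have htotal : ∑ a ∈ c.support \ univ.image f, |c a| + ∑ i, (|c (f i)| - 1) ≤ 0 := by
    simp only [Finset.sum_sub_distrib, sum_const, card_univ, nsmul_eq_mul, mul_one]
    linarith
  obtain ⟨hrest, hexcess⟩ := (add_eq_zero_iff_of_nonneg hrest_nonneg
    (Finset.sum_nonneg fun i _ => hexcess_nonneg i)).mp
      (le_antisymm htotal <|
        add_nonneg hrest_nonneg (Finset.sum_nonneg fun i _ => hexcess_nonneg i))
  have hone : ∀ i, c (f i) = 1 := fun i => by
    have := (Finset.sum_eq_zero_iff_of_nonneg fun i _ => hexcess_nonneg i).mp hexcess i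
      (mem_univ i)
    rwa [abs_of_pos (by linarith [hge i]), sub_eq_zero] at this
  ext a
  rw [Finsupp.finsetSum_apply]
  by_cases ha : a ∈ Set.range f
  · obtain ⟨i, rfl⟩ := ha
    simp [Finsupp.single_apply, hf.eq_iff, hone]
  · rw [Finset.sum_eq_zero fun i _ => Finsupp.single_eq_of_ne fun h => ha ⟨i, h.symm⟩]
    by_cases hs : a ∈ c.support
    · exact abs_eq_zero.mp <| (Finset.sum_eq_zero_iff_of_nonneg fun _ _ => abs_nonneg _).mp
        hrest a (mem_sdiff.mpr ⟨hs, fun h => ha (by simpa using h)⟩)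
    · exact Finsupp.notMem_support_iff.mp hs

end

theorem l1_unique_minimizer_generalized
    (n : ℕ) (d : ℚ) (hd : 0 < d)
    (c : (Fin n → ℚ) →₀ ℝ)
    (hsupp : ∀ α ∈ c.support, (∀ i, 0 ≤ α i) ∧ ∑ i, α i = d)
    (hvol : volume {x : Fin n → ℝ |
        ∑ α ∈ c.support, c α * ∏ i, |x i| ^ ((α i : ℝ)) ≤ 1}
      ≤ volume {x : Fin n → ℝ | ∑ i, |x i| ^ ((d : ℝ)) ≤ 1})
    (hne : c ≠ ∑ i : Fin n,
        Finsupp.single (fun j => if j = i then d else 0) (1 : ℝ)) :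
    (n : ℝ) < ∑ α ∈ c.support, |c α| := by
  by_contra! hle
  have hD : (0 : ℝ) < d := Rat.cast_pos.mpr hd
  have hw := exponentWeight_eq_one hd hsupp hvol (by simpa using hle)
  have hball : {x : Fin n → ℝ | ∑ i, |x i| ^ (d : ℝ) ≤ 1} ⊆ {x | absPolyEval c x ≤ 1} :=
    fun x hx => (absPolyEval_le_weightedPowSum hd hsupp x).trans <| by
      simpa [weightedPowSum, hw] using hx
  have hsub : {x | absPolyEval c x < 1} ⊆ {x : Fin n → ℝ | ∑ i, |x i| ^ (d : ℝ) ≤ 1} :=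
    subset_of_measure_le_of_isOpen (isClosed_le (continuous_sum_abs_rpow hD.le) continuous_const)
      hball hvol (volume_sum_abs_rpow_le_one_lt_top hD).ne
      (isOpen_lt (continuous_absPolyEval fun α hα => (hsupp α hα).1) continuous_const)
      fun _ hx => le_of_lt (α := ℝ) hx
  refine hne ?_
  simp only [← Pi.single_apply]
  exact Finsupp.eq_sum_single_one_of_sum_abs_le (Pi.single_left_injective hd.ne')
    (one_le_coeff_piSingle hd (fun α hα => (hsupp α hα).2) hsub) (by simpa using hle)
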